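/- For every real β > 1/2 there exists a constant c > 0 (independent of N) such that for all odd N ≥ 1 and all u ∈ H_N, the supremum norm satisfies ‖u‖_∞ ≤ c ‖u‖_{H_N^β}. -/

import Mathlib

/-- Eigenvalues of the discrete Laplacian: `λ_{m,N} = 2 N² (1 - cos(2π m / N))`. -/
noncomputable def lamd (N m : ℕ) : ℝ := 2 * (N : ℝ)^2 * (1 - Real.cos (2 * Real.pi * m / N))

/-- `L²([0,1])` inner product of two step functions constant on the intervals `I_j`. -/
noncomputable def ip (N : ℕ) (f g : Fin N → ℝ) : ℝ := (1 / (N : ℝ)) * ∑ j, f j * g j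

/-- Discrete trigonometric eigenfunction `φ_{m,N}` (value on the cell `I_j`). -/
noncomputable def phiN (N m : ℕ) : Fin N → ℝ :=
  fun j => if m = 0 then 1 else Real.sqrt 2 * Real.cos (2 * Real.pi * m * (j : ℕ) / N)

/-- Discrete trigonometric eigenfunction `ψ_{m,N}` (value on the cell `I_j`). -/
noncomputable def psiN (N m : ℕ) : Fin N → ℝ :=
  fun j => Real.sqrt 2 * Real.sin (2 * Real.pi * m * (j : ℕ) / N)

/-- Square of the discrete Sobolev norm `‖f‖²_{H_N^γ}`. -/
noncomputable def sobNormSq (N : ℕ) (γ : ℝ) (f : Fin N → ℝ) : ℝ :=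
  ∑ m ∈ Finset.range ((N - 1) / 2 + 1),
    (1 + lamd N m) ^ γ * ((ip N f (phiN N m))^2 + (ip N f (psiN N m))^2)

/-- Discrete Sobolev norm `‖f‖_{H_N^γ}`. -/
noncomputable def sobNorm (N : ℕ) (γ : ℝ) (f : Fin N → ℝ) : ℝ := Real.sqrt (sobNormSq N γ f)

open Finset Real Complex

lemma expsum (N : ℕ) (hN : 1 ≤ N) (d : ℤ) :
    ∑ k ∈ Finset.range N, Complex.exp (2 * Real.pi * Complex.I * k * d / N)
      = if (N : ℤ) ∣ d then (N : ℂ) else 0 := by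
  set z : ℂ := Complex.exp (2 * Real.pi * Complex.I * d / N) with hz
  have hNne : (N : ℂ) ≠ 0 := by exact_mod_cast Nat.cast_ne_zero.2 (by omega)
  have hzk : ∀ k : ℕ, Complex.exp (2 * Real.pi * Complex.I * k * d / N) = z ^ k := by
    intro k
    rw [hz, ← Complex.exp_nat_mul]
    ring_nf
  have hz1 : z = 1 ↔ (N : ℤ) ∣ d := by
    rw [hz, Complex.exp_eq_one_iff]
    constructor
    · rintro ⟨n, hn⟩
      refine ⟨n, ?_⟩
      have h2 : (2 : ℂ) * Real.pi * Complex.I ≠ 0 := by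
        simp [Real.pi_ne_zero, Complex.I_ne_zero]
      have hn' := (div_eq_iff hNne).1 hn
      have hd : (d : ℂ) = n * N :=
        mul_left_cancel₀ h2 (by linear_combination hn')
      have : d = n * N := by exact_mod_cast hd
      rw [this]; ring
    · rintro ⟨n, rfl⟩
      exact ⟨n, by push_cast; field_simp⟩
  simp only [hzk]
  by_cases h : (N : ℤ) ∣ d
  · simp [h, hz1.2 h]
  · rw [if_neg h]
    have hzne : z ≠ 1 := fun hc => h (hz1.1 hc)
    rw [geom_sum_eq hzne]
    have hzN : z ^ N = 1 := by
      rw [hz, ← Complex.exp_nat_mul]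
      have : (N : ℂ) * (2 * Real.pi * Complex.I * d / N) = d * (2 * Real.pi * Complex.I) := by
        field_simp
      rw [this, Complex.exp_int_mul_two_pi_mul_I]
    simp [hzN]

lemma cossum (N : ℕ) (hN : 1 ≤ N) (d : ℤ) :
    ∑ k ∈ Finset.range N, Real.cos (2 * Real.pi * k * d / N)
      = if (N : ℤ) ∣ d then (N : ℝ) else 0 := by
  have key : ∀ k : ℕ, Real.cos (2 * Real.pi * k * d / N)
      = (Complex.exp (2 * Real.pi * Complex.I * k * d / N)).re := by
    intro k
    rw [show (2 * (Real.pi : ℂ) * Complex.I * k * d / N : ℂ)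
        = ((2 * Real.pi * k * d / N : ℝ) : ℂ) * Complex.I by push_cast; ring,
      Complex.exp_ofReal_mul_I_re]
  simp only [key]
  rw [← Complex.re_sum, expsum N hN d]
  split <;> simp

lemma halfsum (N : ℕ) (hodd : Odd N) (d : ℤ) :
    ∑ k ∈ Finset.range N, Real.cos (2 * Real.pi * k * d / N)
      = 1 + ∑ m ∈ Finset.Ico 1 ((N - 1) / 2 + 1), 2 * Real.cos (2 * Real.pi * m * d / N) := by
  obtain ⟨M, hM⟩ := hodd
  have hM2 : (N - 1) / 2 = M := by omega
  have hNne : (N : ℝ) ≠ 0 := by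
    have : 0 < N := by omega
    positivity
  set f : ℕ → ℝ := fun k => Real.cos (2 * Real.pi * k * d / N) with hf
  have hrefl : ∀ m ∈ Finset.Ico 1 (M + 1), f (N - m) = f m := by
    intro m hm
    simp only [Finset.mem_Ico] at hm
    have hmN : m ≤ N := by omega
    have hcast : ((N - m : ℕ) : ℝ) = (N : ℝ) - m := by
      push_cast [hmN]; ring
    have harg : 2 * Real.pi * ((N - m : ℕ) : ℝ) * d / N
        = (d : ℝ) * (2 * Real.pi) - 2 * Real.pi * m * d / N := by
      rw [hcast]; field_simp
    simp only [hf, harg]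
    exact Real.cos_int_mul_two_pi_sub _ d
  have hsplit : ∑ k ∈ Finset.range N, f k
      = ∑ k ∈ Finset.Ico 0 (M + 1), f k + ∑ k ∈ Finset.Ico (M + 1) N, f k := by
    rw [Finset.range_eq_Ico,
      ← Finset.sum_Ico_consecutive f (Nat.zero_le (M + 1)) (by omega : M + 1 ≤ N)]
  have hsecond : ∑ k ∈ Finset.Ico (M + 1) N, f k = ∑ m ∈ Finset.Ico 1 (M + 1), f m := by
    refine (Finset.sum_nbij' (i := fun m => N - m) (j := fun k => N - k)
      ?_ ?_ ?_ ?_ ?_).symm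
    · intro a ha; simp only [Finset.mem_Ico] at *; omega
    · intro a ha; simp only [Finset.mem_Ico] at *; omega
    · intro a ha; simp only [Finset.mem_Ico] at ha; omega
    · intro a ha; simp only [Finset.mem_Ico] at ha; omega
    · intro a ha; exact (hrefl a ha).symm
  have hfirst : ∑ k ∈ Finset.Ico 0 (M + 1), f k = f 0 + ∑ k ∈ Finset.Ico 1 (M + 1), f k := by
    rw [← Finset.sum_Ico_consecutive f (Nat.zero_le 1) (by omega : 1 ≤ M + 1)]
    simp
  have hf0 : f 0 = 1 := by simp [hf]
  rw [hsplit, hsecond, hfirst, hf0, hM2, add_assoc, ← Finset.sum_add_distrib]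
  congr 1
  exact Finset.sum_congr rfl (fun m _ => by simp only [hf]; ring)

lemma inversion (N : ℕ) (hodd : Odd N) (h1 : 1 ≤ N) (u : Fin N → ℝ) (j : Fin N) :
    u j = ∑ m ∈ Finset.range ((N - 1) / 2 + 1),
      (ip N u (phiN N m) * phiN N m j + ip N u (psiN N m) * psiN N m j) := by
  have hNpos : (0 : ℝ) < N := by exact_mod_cast h1
  have hNne : (N : ℝ) ≠ 0 := ne_of_gt hNpos
  have hker : ∀ l : Fin N, ∑ m ∈ Finset.range ((N - 1) / 2 + 1),
      (phiN N m l * phiN N m j + psiN N m l * psiN N m j)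
      = if l = j then (N : ℝ) else 0 := by
    intro l
    set d : ℤ := (j : ℤ) - (l : ℤ) with hd
    have hdR : ((d : ℤ) : ℝ) = ((j : ℕ) : ℝ) - ((l : ℕ) : ℝ) := by push_cast [hd]; ring
    have key : ∀ m, phiN N m l * phiN N m j + psiN N m l * psiN N m j
        = if m = 0 then 1 else 2 * Real.cos (2 * Real.pi * m * d / N) := by
      intro m
      by_cases hm : m = 0
      · simp [phiN, psiN, hm]
      · simp only [phiN, psiN, if_neg hm]
        have hs2 : Real.sqrt 2 * Real.sqrt 2 = 2 := Real.mul_self_sqrt (by norm_num)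
        have harg : 2 * Real.pi * m * (d : ℝ) / N
            = 2 * Real.pi * m * ((j : ℕ) : ℝ) / N - 2 * Real.pi * m * ((l : ℕ) : ℝ) / N := by
          rw [hdR]; field_simp
        rw [harg, Real.cos_sub]
        linear_combination (Real.cos (2 * Real.pi * m * ((l : ℕ) : ℝ) / N) *
            Real.cos (2 * Real.pi * m * ((j : ℕ) : ℝ) / N) +
            Real.sin (2 * Real.pi * m * ((l : ℕ) : ℝ) / N) *
            Real.sin (2 * Real.pi * m * ((j : ℕ) : ℝ) / N)) * hs2
    simp only [key]
    have hsplit : ∑ m ∈ Finset.range ((N - 1) / 2 + 1),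
        (if m = 0 then (1 : ℝ) else 2 * Real.cos (2 * Real.pi * m * d / N))
        = 1 + ∑ m ∈ Finset.Ico 1 ((N - 1) / 2 + 1), 2 * Real.cos (2 * Real.pi * m * d / N) := by
      rw [Finset.range_eq_Ico,
        ← Finset.sum_Ico_consecutive _ (Nat.zero_le 1) (by omega : 1 ≤ (N - 1) / 2 + 1)]
      congr 1
      · simp
      · exact Finset.sum_congr rfl (fun m hm => by
          simp only [Finset.mem_Ico] at hm
          rw [if_neg (by omega)])
    rw [hsplit, ← halfsum N hodd d, cossum N h1 d]
    have hdvd : (N : ℤ) ∣ d ↔ l = j := by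
      constructor
      · intro hdvd
        have h1' : d = 0 := by
          have hj := j.isLt; have hl := l.isLt
          rcases hdvd with ⟨c, hc⟩
          have hNZ : (0 : ℤ) < N := by exact_mod_cast h1
          have ha : -(N : ℤ) < d := by omega
          have hb : d < N := by omega
          have hc0 : c = 0 := by nlinarith
          rw [hc, hc0, mul_zero]
        have : (j : ℤ) = (l : ℤ) := by omega
        exact (Fin.ext (by omega)).symm
      · rintro rfl; simp [hd]
    by_cases hc : l = j
    · rw [if_pos (hdvd.2 hc), if_pos hc]
    · rw [if_neg (fun h => hc (hdvd.1 h)), if_neg hc]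
  have expand : ∀ m : ℕ,
      ip N u (phiN N m) * phiN N m j + ip N u (psiN N m) * psiN N m j
      = (1 / (N : ℝ)) * ∑ l, u l * (phiN N m l * phiN N m j + psiN N m l * psiN N m j) := by
    intro m
    simp only [ip, Finset.mul_sum]
    rw [Finset.sum_mul, Finset.sum_mul, ← Finset.sum_add_distrib]
    exact Finset.sum_congr rfl (fun l _ => by ring)
  simp only [expand]
  rw [← Finset.mul_sum, Finset.sum_comm]
  have : ∀ l : Fin N, ∑ m ∈ Finset.range ((N - 1) / 2 + 1),
      u l * (phiN N m l * phiN N m j + psiN N m l * psiN N m j)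
      = u l * (if l = j then (N : ℝ) else 0) := by
    intro l
    rw [← Finset.mul_sum, hker l]
  simp only [this, mul_ite, mul_zero]
  rw [Finset.sum_ite_eq' Finset.univ j (fun l => u l * (N : ℝ))]
  simp [hNne]
  field_simp

lemma lamd_nonneg (N m : ℕ) : 0 ≤ lamd N m := by
  unfold lamd
  have h := Real.cos_le_one (2 * Real.pi * m / N)
  apply mul_nonneg (by positivity) (by linarith)

lemma lamd_lb (N m : ℕ) (hodd : Odd N) (h1 : 1 ≤ N) (hm : m ≤ (N - 1) / 2) :
    16 * (m : ℝ)^2 ≤ lamd N m := by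
  have hNpos : (0 : ℝ) < N := by exact_mod_cast h1
  set θ : ℝ := 2 * Real.pi * m / N with hθ
  have hθ0 : 0 ≤ θ := by positivity
  have hθπ : θ ≤ Real.pi := by
    rw [hθ, div_le_iff₀ hNpos]
    have h2m : (2 * m : ℝ) ≤ (N : ℝ) := by
      have : 2 * m ≤ N := by omega
      exact_mod_cast this
    nlinarith [Real.pi_pos]
  have hsin : θ / Real.pi ≤ Real.sin (θ / 2) := by
    have := Real.mul_le_sin (x := θ / 2) (by linarith) (by linarith)
    calc θ / Real.pi = 2 / Real.pi * (θ / 2) := by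
          field_simp
      _ ≤ Real.sin (θ / 2) := this
  have hcos : 1 - Real.cos θ = 2 * Real.sin (θ / 2) ^ 2 := by
    have h := Real.sin_sq_eq_half_sub (θ / 2)
    rw [show 2 * (θ / 2) = θ by ring] at h
    linarith
  have h2 : 2 * (θ / Real.pi) ^ 2 ≤ 1 - Real.cos θ := by
    rw [hcos]
    have h0 : 0 ≤ θ / Real.pi := by positivity
    nlinarith
  unfold lamd
  rw [← hθ]
  have hπ : (θ / Real.pi) = 2 * m / N := by
    rw [hθ]
    field_simp [Real.pi_ne_zero]
  have : 2 * (2 * (m:ℝ) / N)^2 ≤ 1 - Real.cos θ := by rw [← hπ]; exact h2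
  have hNne : (N:ℝ) ≠ 0 := ne_of_gt hNpos
  have expand : 2 * (N:ℝ)^2 * (2 * (2 * (m:ℝ) / N)^2) = 16 * (m:ℝ)^2 := by
    field_simp; ring
  nlinarith [sq_nonneg ((N:ℝ))]

lemma summable_g (β : ℝ) (hβ : 1/2 < β) :
    Summable (fun m : ℕ => (1 + 16 * (m : ℝ)^2) ^ (-β)) := by
  rw [← summable_nat_add_iff 1]
  have hsum : Summable (fun m : ℕ => (((m : ℝ) + 1)) ^ (-(2 * β))) := by
    have h0 : Summable (fun m : ℕ => (m : ℝ) ^ (-(2 * β))) :=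
      Real.summable_nat_rpow.2 (by linarith)
    have := (summable_nat_add_iff (f := fun m : ℕ => (m : ℝ) ^ (-(2 * β))) 1).2 h0
    simpa using this
  refine Summable.of_nonneg_of_le (fun m => by positivity) (fun m => ?_) hsum
  have h1 : (0 : ℝ) < ((m : ℝ) + 1)^2 := by positivity
  have h2 : ((m : ℝ) + 1)^2 ≤ 1 + 16 * (((m + 1 : ℕ) : ℝ))^2 := by push_cast; nlinarith
  have h3 := Real.rpow_le_rpow_of_nonpos h1 h2 (by linarith : -β ≤ 0)
  refine le_trans h3 ?_
  rw [← Real.rpow_natCast ((m : ℝ) + 1) 2, ← Real.rpow_mul (by positivity)]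
  norm_num

/-- Discrete Sobolev embedding: for `β > 1/2`, `‖u‖_∞ ≤ c ‖u‖_{H_N^β}` with `c`
independent of (odd) `N`. -/
theorem stmt_7 (β : ℝ) (hβ : 1/2 < β) :
    ∃ c : ℝ, 0 < c ∧ ∀ N : ℕ, Odd N → 1 ≤ N → ∀ u : Fin N → ℝ, ∀ j : Fin N,
      |u j| ≤ c * sobNorm N β u := by
  set g : ℕ → ℝ := fun m => (1 + 16 * (m : ℝ)^2) ^ (-β) with hg
  have hgsum := summable_g β hβ
  set T : ℝ := ∑' m, g m with hT
  have hT0 : 0 ≤ T := tsum_nonneg (fun m => by positivity)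
  refine ⟨Real.sqrt 2 * Real.sqrt (T + 1), by positivity, ?_⟩
  intro N hodd h1 u j
  set M := (N - 1) / 2 with hM
  set a : ℕ → ℝ := fun m => ip N u (phiN N m) with ha
  set b : ℕ → ℝ := fun m => ip N u (psiN N m) with hb
  have hPpos : ∀ m : ℕ, (0 : ℝ) < 1 + lamd N m := fun m => by
    have := lamd_nonneg N m; linarith
  -- pointwise bound on each eigenfunction value
  have hpoint : ∀ m : ℕ, |a m * phiN N m j + b m * psiN N m j|
      ≤ Real.sqrt 2 * Real.sqrt ((a m)^2 + (b m)^2) := by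
    intro m
    have hφψ : (phiN N m j)^2 + (psiN N m j)^2 ≤ 2 := by
      by_cases hm : m = 0
      · simp [phiN, psiN, hm]
      · simp only [phiN, psiN, if_neg hm]
        have hs2 : Real.sqrt 2 ^ 2 = 2 := Real.sq_sqrt (by norm_num)
        have := Real.sin_sq_add_cos_sq (2 * Real.pi * m * ((j : ℕ) : ℝ) / N)
        nlinarith
    have key : (a m * phiN N m j + b m * psiN N m j)^2 ≤ 2 * ((a m)^2 + (b m)^2) := by
      nlinarith [sq_nonneg (a m * psiN N m j - b m * phiN N m j), sq_nonneg (a m),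
        sq_nonneg (b m), sq_nonneg (phiN N m j), sq_nonneg (psiN N m j)]
    rw [← Real.sqrt_sq_eq_abs]
    refine le_trans (Real.sqrt_le_sqrt key) ?_
    rw [Real.sqrt_mul (by norm_num : (0:ℝ) ≤ 2)]
  -- Cauchy–Schwarz
  have hCS := Real.sum_mul_le_sqrt_mul_sqrt (Finset.range (M + 1))
    (fun m => (1 + lamd N m) ^ (-(β/2)))
    (fun m => (1 + lamd N m) ^ (β/2) * Real.sqrt ((a m)^2 + (b m)^2))
  have hLHS : ∀ m : ℕ, (1 + lamd N m) ^ (-(β/2)) *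
      ((1 + lamd N m) ^ (β/2) * Real.sqrt ((a m)^2 + (b m)^2))
      = Real.sqrt ((a m)^2 + (b m)^2) := by
    intro m
    rw [← mul_assoc, ← Real.rpow_add (hPpos m)]
    norm_num
  have hsq1 : ∀ m : ℕ, ((1 + lamd N m) ^ (-(β/2)))^2 = (1 + lamd N m) ^ (-β) := by
    intro m
    rw [← Real.rpow_natCast ((1 + lamd N m) ^ (-(β/2))) 2, ← Real.rpow_mul (hPpos m).le]
    norm_num
  have hsq2 : ∀ m : ℕ, ((1 + lamd N m) ^ (β/2) * Real.sqrt ((a m)^2 + (b m)^2))^2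
      = (1 + lamd N m) ^ β * ((a m)^2 + (b m)^2) := by
    intro m
    rw [mul_pow, ← Real.rpow_natCast ((1 + lamd N m) ^ (β/2)) 2,
      ← Real.rpow_mul (hPpos m).le, Real.sq_sqrt (by positivity)]
    norm_num
  simp only [hLHS, hsq1, hsq2] at hCS
  -- bound on the weight sum
  have hwt : ∑ m ∈ Finset.range (M + 1), (1 + lamd N m) ^ (-β) ≤ T + 1 := by
    have hstep : ∀ m ∈ Finset.range (M + 1), (1 + lamd N m) ^ (-β) ≤ g m := by
      intro m hm
      simp only [Finset.mem_range] at hm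
      have hlb := lamd_lb N m hodd h1 (by omega)
      exact Real.rpow_le_rpow_of_nonpos (by positivity) (by linarith) (by linarith)
    calc ∑ m ∈ Finset.range (M + 1), (1 + lamd N m) ^ (-β)
        ≤ ∑ m ∈ Finset.range (M + 1), g m := Finset.sum_le_sum hstep
      _ ≤ T := Summable.sum_le_tsum (Finset.range (M + 1)) (fun m _ => by positivity) hgsum
      _ ≤ T + 1 := by linarith
  -- assemble
  have habs : |u j| ≤ ∑ m ∈ Finset.range (M + 1),
      Real.sqrt ((a m)^2 + (b m)^2) * Real.sqrt 2 := by
    rw [inversion N hodd h1 u j]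
    refine le_trans (Finset.abs_sum_le_sum_abs _ _) ?_
    exact Finset.sum_le_sum (fun m _ => by
      rw [mul_comm (Real.sqrt ((a m)^2 + (b m)^2))]
      exact hpoint m)
  have hsobeq : Real.sqrt (∑ x ∈ Finset.range (M + 1),
      (1 + lamd N x) ^ β * ((a x)^2 + (b x)^2)) = sobNorm N β u := by
    rw [sobNorm, sobNormSq]
  have hs : ∑ m ∈ Finset.range (M + 1), Real.sqrt ((a m)^2 + (b m)^2)
      ≤ Real.sqrt (T + 1) * sobNorm N β u := by
    refine hCS.trans ?_
    rw [hsobeq]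
    have hsob0 : 0 ≤ sobNorm N β u := Real.sqrt_nonneg _
    exact mul_le_mul_of_nonneg_right (Real.sqrt_le_sqrt hwt) hsob0
  calc |u j| ≤ ∑ m ∈ Finset.range (M + 1), Real.sqrt ((a m)^2 + (b m)^2) * Real.sqrt 2 :=
        habs
    _ = Real.sqrt 2 * ∑ m ∈ Finset.range (M + 1), Real.sqrt ((a m)^2 + (b m)^2) := by
        rw [← Finset.sum_mul]; ring
    _ ≤ Real.sqrt 2 * (Real.sqrt (T + 1) * sobNorm N β u) :=
        mul_le_mul_of_nonneg_left hs (Real.sqrt_nonneg 2)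
    _ = Real.sqrt 2 * Real.sqrt (T + 1) * sobNorm N β u := by ring
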